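/- arXiv:2001.09441 — 5 statements merged into one kernel-verified Lean document; each statement's English description precedes it below -/
import Mathlib

section
/- With the setup of the compactness lemma (n, r ≥ 1, s ≥ 0, d_i > 0, κ_i ∈ (0,1) for i ≤ r, κ_i = 0 for i > r, T_𝔞, T_i > 0, m maximizing κ_i/T_i over i ≤ r), fix ε > 0 and let Γ_𝔞(ε) = max{n/(2ε), (∑_{i=1}^{r+s} d_i(1-κ_i))/ε} and, for j ∈ {1,...,r+s}, Γ_j(ε) = (2 Γ_𝔞(ε)²/(T_𝔞 d_j(1-κ_j))) (∑_{i=1}^{r+s} d_i(1-κ_i)/n + 1/2). Suppose positive reals α, α_1,...,α_{r+s} satisfy n T_𝔞/α + ∑ d_i T_i/α_i = 1, α ≤ Γ_𝔞(ε), and α_j > Γ_j(ε) for some j. Then the scalar curvature S = -(1/4)∑_{i=1}^{r+s}(α_i/α²)d_i(1-κ_i) + (1/2)∑_{i=1}^{r+s} d_i(1-κ_i)/α + n/(4α) + (1/4)∑_{i=1}^{r} κ_i d_i/α_i satisfies S < κ_m/(4T_m). -/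
/-!
The constraint `n T_𝔞 / α + ∑ d_i T_i / α_i = 1` gives `n T_𝔞 ≤ α` and
`∑ d_i T_i / α_i ≤ 1`. The first bounds the positive terms `(1/2) D / α + n / (4α)`, where
`D = ∑ d_i (1 - κ_i)`, by `(D/n + 1/2) / (2 T_𝔞)`; the second bounds
`(1/4) ∑_{i ≤ r} κ_i d_i / α_i` by `κ_m / (4 T_m)`, since `κ_i / T_i ≤ κ_m / T_m`.
The single negative term of index `j` alone exceeds `(D/n + 1/2) / (2 T_𝔞)`,
because `α ≤ Γ_𝔞` and `α_j` is larger than `Γ_j`.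
-/

open Finset

lemma lt_one_of_mem_Icc {r s : ℕ} {κ : ℕ → ℝ}
    (hκ1 : ∀ i ∈ Icc 1 r, 0 < κ i ∧ κ i < 1)
    (hκ2 : ∀ i ∈ Icc (r + 1) (r + s), κ i = 0) {i : ℕ} (hi : i ∈ Icc 1 (r + s)) : κ i < 1 := by
  rw [mem_Icc] at hi
  rcases le_or_gt i r with hir | hir
  · exact (hκ1 i (mem_Icc.2 ⟨hi.1, hir⟩)).2
  · rw [hκ2 i (mem_Icc.2 ⟨hir, hi.2⟩)]
    exact one_pos

lemma sum_mul_div_le_mul_sum {ι : Type*} {s t : Finset ι} (hst : s ⊆ t) {κ d T α : ι → ℝ}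
    {M : ℝ} (hM : 0 ≤ M) (hmax : ∀ i ∈ s, κ i / T i ≤ M)
    (hd : ∀ i ∈ t, 0 < d i) (hT : ∀ i ∈ t, 0 < T i) (hα : ∀ i ∈ t, 0 < α i) :
    ∑ i ∈ s, κ i * d i / α i ≤ M * ∑ i ∈ t, d i * T i / α i := by
  have hw : ∀ i ∈ t, 0 ≤ d i * T i / α i := fun i hi =>
    (div_pos (mul_pos (hd i hi) (hT i hi)) (hα i hi)).le
  calc ∑ i ∈ s, κ i * d i / α i
      = ∑ i ∈ s, κ i / T i * (d i * T i / α i) := by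
        refine sum_congr rfl fun i hi => ?_
        have := (hT i (hst hi)).ne'
        field_simp
    _ ≤ ∑ i ∈ s, M * (d i * T i / α i) :=
        sum_le_sum fun i hi => mul_le_mul_of_nonneg_right (hmax i hi) (hw i (hst hi))
    _ ≤ M * ∑ i ∈ t, d i * T i / α i := by
        rw [← mul_sum]
        exact mul_le_mul_of_nonneg_left (sum_le_sum_of_subset_of_nonneg hst
          fun i hi _ => hw i hi) hM

lemma half_mul_div_add_div_le {D n Ta α : ℝ} (hD : 0 ≤ D) (hn : 0 < n) (hTa : 0 < Ta)
    (hle : n * Ta ≤ α) :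
    1 / 2 * (D / α) + n / (4 * α) ≤ (D / n + 1 / 2) / (2 * Ta) := by
  have hnTa : 0 < n * Ta := mul_pos hn hTa
  calc 1 / 2 * (D / α) + n / (4 * α)
      ≤ 1 / 2 * (D / (n * Ta)) + n / (4 * (n * Ta)) := by
        gcongr
    _ = (D / n + 1 / 2) / (2 * Ta) := by
        field_simp
        ring

lemma div_lt_quarter_mul_of_lt {A c Ta Γ α x : ℝ} (hc : 0 < c) (hTa : 0 < Ta) (hα : 0 < α)
    (hαΓ : α ≤ Γ) (hx : 0 ≤ x) (hbig : 2 * Γ ^ 2 / (Ta * c) * A < x) :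
    A / (2 * Ta) < 1 / 4 * (x / α ^ 2 * c) := by
  have hΓ : 0 < Γ := hα.trans_le hαΓ
  calc A / (2 * Ta)
      = 1 / 4 * (2 * Γ ^ 2 / (Ta * c) * A / Γ ^ 2 * c) := by
        field_simp
        ring
    _ < 1 / 4 * (x / Γ ^ 2 * c) := by
        gcongr
    _ ≤ 1 / 4 * (x / α ^ 2 * c) := by
        gcongr

theorem stmt2_general (n r s : ℕ) (hn : 0 < n)
    (d κ T α : ℕ → ℝ) (Ta αa : ℝ) (m j : ℕ)
    (hd : ∀ i ∈ Icc 1 (r + s), 0 < d i)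
    (hκ1 : ∀ i ∈ Icc 1 r, 0 < κ i ∧ κ i < 1)
    (hκ2 : ∀ i ∈ Icc (r + 1) (r + s), κ i = 0)
    (hTa : 0 < Ta) (hT : ∀ i ∈ Icc 1 (r + s), 0 < T i)
    (hm : m ∈ Icc 1 r) (hmax : ∀ i ∈ Icc 1 r, κ i / T i ≤ κ m / T m)
    (hαa : 0 < αa) (hα : ∀ i ∈ Icc 1 (r + s), 0 < α i)
    (hconstr : (n : ℝ) * Ta / αa + ∑ i ∈ Icc 1 (r + s), d i * T i / α i = 1)
    (Γa : ℝ)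
    (hsmall : αa ≤ Γa)
    (hj : j ∈ Icc 1 (r + s))
    (hjbig : α j > (2 * Γa ^ 2 / (Ta * d j * (1 - κ j)))
      * ((∑ i ∈ Icc 1 (r + s), d i * (1 - κ i)) / n + 1 / 2)) :
    -(1 / 4) * ∑ i ∈ Icc 1 (r + s), (α i / αa ^ 2) * d i * (1 - κ i)
      + (1 / 2) * ∑ i ∈ Icc 1 (r + s), d i * (1 - κ i) / αa
      + (n : ℝ) / (4 * αa)
      + (1 / 4) * ∑ i ∈ Icc 1 r, κ i * d i / α i
    < κ m / (4 * T m) := by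
  have hsub : Icc 1 r ⊆ Icc 1 (r + s) := Icc_subset_Icc_right (Nat.le_add_right r s)
  have hκ : ∀ i ∈ Icc 1 (r + s), 0 < 1 - κ i := fun i hi =>
    sub_pos.2 (lt_one_of_mem_Icc hκ1 hκ2 hi)
  have hP : 0 ≤ ∑ i ∈ Icc 1 (r + s), d i * T i / α i := sum_nonneg fun i hi =>
    (div_pos (mul_pos (hd i hi) (hT i hi)) (hα i hi)).le
  have hnTa : (n : ℝ) * Ta ≤ αa := (div_le_one hαa).1 (by linarith)
  have hP1 : ∑ i ∈ Icc 1 (r + s), d i * T i / α i ≤ 1 := by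
    have : 0 ≤ (n : ℝ) * Ta / αa := by positivity
    linarith
  have hκm : 0 ≤ κ m / T m := (div_pos (hκ1 m hm).1 (hT m (hsub hm))).le
  have hpos := half_mul_div_add_div_le
    (sum_nonneg fun i hi => (mul_pos (hd i hi) (hκ i hi)).le) (Nat.cast_pos.2 hn) hTa hnTa
  have hneg := div_lt_quarter_mul_of_lt
    (A := (∑ i ∈ Icc 1 (r + s), d i * (1 - κ i)) / n + 1 / 2)
    (mul_pos (hd j hj) (hκ j hj)) hTa hαa hsmall (hα j hj).le (by rwa [← mul_assoc])
  have hsingle : α j / αa ^ 2 * d j * (1 - κ j)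
      ≤ ∑ i ∈ Icc 1 (r + s), α i / αa ^ 2 * d i * (1 - κ i) :=
    single_le_sum (f := fun i => α i / αa ^ 2 * d i * (1 - κ i))
      (fun i hi => (mul_pos (mul_pos (div_pos (hα i hi) (by positivity)) (hd i hi)) (hκ i hi)).le) hj
  have hκsum := (sum_mul_div_le_mul_sum hsub hκm hmax hd hT hα).trans
    (mul_le_of_le_one_right hκm hP1)
  rw [← sum_div, show κ m / (4 * T m) = 1 / 4 * (κ m / T m) by ring]
  linarith

theorem stmt2 (n r s : ℕ) (hn : 0 < n) (hr : 0 < r)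
    (d κ T α : ℕ → ℝ) (Ta αa ε : ℝ) (m j : ℕ)
    (hd : ∀ i ∈ Icc 1 (r + s), 0 < d i)
    (hκ1 : ∀ i ∈ Icc 1 r, 0 < κ i ∧ κ i < 1)
    (hκ2 : ∀ i ∈ Icc (r + 1) (r + s), κ i = 0)
    (hTa : 0 < Ta) (hT : ∀ i ∈ Icc 1 (r + s), 0 < T i)
    (hm : m ∈ Icc 1 r) (hmax : ∀ i ∈ Icc 1 r, κ i / T i ≤ κ m / T m)
    (hε : 0 < ε)
    (hαa : 0 < αa) (hα : ∀ i ∈ Icc 1 (r + s), 0 < α i)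
    (hconstr : (n : ℝ) * Ta / αa + ∑ i ∈ Icc 1 (r + s), d i * T i / α i = 1)
    (Γa : ℝ)
    (hΓa : Γa = max ((n : ℝ) / (2 * ε)) ((∑ i ∈ Icc 1 (r + s), d i * (1 - κ i)) / ε))
    (hsmall : αa ≤ Γa)
    (hj : j ∈ Icc 1 (r + s))
    (hjbig : α j > (2 * Γa ^ 2 / (Ta * d j * (1 - κ j)))
      * ((∑ i ∈ Icc 1 (r + s), d i * (1 - κ i)) / n + 1 / 2)) :
    -(1 / 4) * ∑ i ∈ Icc 1 (r + s), (α i / αa ^ 2) * d i * (1 - κ i)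
      + (1 / 2) * ∑ i ∈ Icc 1 (r + s), d i * (1 - κ i) / αa
      + (n : ℝ) / (4 * αa)
      + (1 / 4) * ∑ i ∈ Icc 1 r, κ i * d i / α i
    < κ m / (4 * T m) :=
  stmt2_general n r s hn d κ T α Ta αa m j hd hκ1 hκ2 hTa hT hm hmax hαa hα hconstr Γa hsmall hj
    hjbig
end

section
/- Assume n, d_1,...,d_{r+s} > 0, κ_i ∈ (0,1) for i ≤ r and κ_i = 0 for i > r, and T_𝔞, T_1,...,T_{r+s} > 0, s ≥ 0, r ≥ 1. Suppose positive reals α, α_1,...,α_{r+s} satisfy, for every j ∈ {1,...,r}: -(d_j T_j/(2 n T_𝔞 α α_j)) ∑_{i=1}^{r+s} α_i d_i (1-κ_i) - (α_j/(4α²)) d_j (1-κ_j) + (d_j T_j/(2 n T_𝔞 α_j)) ∑_{i=1}^{r+s} d_i (1-κ_i) + d_j T_j/(4 T_𝔞 α_j) - κ_j d_j/(4 α_j) = 0. Then n T_𝔞 max_{j=1,...,r} κ_j/T_j < 2 ∑_{i=1}^{r} d_i(1-κ_i) + 2s + n. (Here ∑_{i=1}^{r+s} d_i(1-κ_i) =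 ∑_{i=1}^{r} d_i(1-κ_i) + s when d_i = 1 for i > r; more generally the conclusion is n T_𝔞 κ_j/T_j < 2 ∑_{i=1}^{r+s} d_i(1-κ_i) + n for each j.) -/
/-!
Criticality of the variation in the direction `j` says that the first two terms of the displayed
quantity, both strictly negative, are balanced by the last three, which therefore have positive sum.
That sum factors as `d_j T_j / (4 n T_𝔞 α_j) * (2 ∑ d_i (1 - κ_i) + n - n T_𝔞 κ_j / T_j)`, and the
prefactor is positive. The sum over `i > r` contributes exactly `s`.
-/

open Finset

theorem mul_div_lt_of_critical {N Ta αa dj Tj αj κj A S : ℝ}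
    (hN : 0 < N) (hTa : 0 < Ta) (hαa : 0 < αa) (hdj : 0 < dj) (hTj : 0 < Tj) (hαj : 0 < αj)
    (hκj : κj < 1) (hA : 0 ≤ A)
    (hcrit : -(dj * Tj / (2 * N * Ta * αa * αj)) * A - (αj / (4 * αa ^ 2)) * dj * (1 - κj)
      + (dj * Tj / (2 * N * Ta * αj)) * S + dj * Tj / (4 * Ta * αj) - κj * dj / (4 * αj) = 0) :
    N * Ta * (κj / Tj) < 2 * S + N := by
  have hweighted : 0 ≤ dj * Tj / (2 * N * Ta * αa * αj) * A := by positivity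
  have hself : 0 < αj / (4 * αa ^ 2) * dj * (1 - κj) := by
    have : 0 < 1 - κj := sub_pos.mpr hκj
    positivity
  have hfactor : (dj * Tj / (2 * N * Ta * αj)) * S + dj * Tj / (4 * Ta * αj) - κj * dj / (4 * αj)
      = dj * Tj / (4 * N * Ta * αj) * (2 * S + N - N * Ta * (κj / Tj)) := by
    field_simp
    ring
  have hpos : 0 < dj * Tj / (4 * N * Ta * αj) * (2 * S + N - N * Ta * (κj / Tj)) := by
    rw [← hfactor]
    linarith
  exact sub_pos.mp (pos_of_mul_pos_right hpos (by positivity))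

theorem sum_Icc_one_add (f : ℕ → ℝ) (r s : ℕ) :
    ∑ i ∈ Icc 1 (r + s), f i = ∑ i ∈ Icc 1 r, f i + ∑ i ∈ Icc (r + 1) (r + s), f i := by
  simp only [Icc_add_one_left_eq_Ioc]
  exact (sum_Ioc_consecutive f (Nat.zero_le r) (Nat.le_add_right r s)).symm

theorem stmt5_general (n r s : ℕ) (hn : 0 < n)
    (d κ T α : ℕ → ℝ) (Ta αa : ℝ)
    (hd : ∀ i ∈ Icc 1 (r + s), 0 < d i)
    (hd1 : ∀ i ∈ Icc (r + 1) (r + s), d i = 1)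
    (hκ1 : ∀ i ∈ Icc 1 r, 0 < κ i ∧ κ i < 1)
    (hκ2 : ∀ i ∈ Icc (r + 1) (r + s), κ i = 0)
    (hTa : 0 < Ta) (hT : ∀ i ∈ Icc 1 (r + s), 0 < T i)
    (hαa : 0 < αa) (hα : ∀ i ∈ Icc 1 (r + s), 0 < α i)
    (hcrit : ∀ j ∈ Icc 1 r,
      -(d j * T j / (2 * n * Ta * αa * α j)) * ∑ i ∈ Icc 1 (r + s), α i * d i * (1 - κ i)
      - (α j / (4 * αa ^ 2)) * d j * (1 - κ j)
      + (d j * T j / (2 * n * Ta * α j)) * ∑ i ∈ Icc 1 (r + s), d i * (1 - κ i)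
      + d j * T j / (4 * Ta * α j)
      - κ j * d j / (4 * α j) = 0) :
    ∀ j ∈ Icc 1 r,
      (n : ℝ) * Ta * (κ j / T j)
        < 2 * ∑ i ∈ Icc 1 r, d i * (1 - κ i) + 2 * s + n := by
  intro j hj
  have hj' : j ∈ Icc 1 (r + s) := Icc_subset_Icc_right (Nat.le_add_right r s) hj
  have hκ_le_one (i : ℕ) (hi : i ∈ Icc 1 (r + s)) : κ i ≤ 1 := by
    by_cases hir : i ≤ r
    · exact (hκ1 i (mem_Icc.mpr ⟨(mem_Icc.mp hi).1, hir⟩)).2.le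
    · rw [hκ2 i (mem_Icc.mpr ⟨by omega, (mem_Icc.mp hi).2⟩)]
      exact zero_le_one
  have hA : 0 ≤ ∑ i ∈ Icc 1 (r + s), α i * d i * (1 - κ i) := sum_nonneg fun i hi =>
    mul_nonneg (mul_pos (hα i hi) (hd i hi)).le (sub_nonneg.mpr (hκ_le_one i hi))
  have htail : ∑ i ∈ Icc (r + 1) (r + s), d i * (1 - κ i) = s := by
    rw [sum_congr rfl fun i hi => by rw [hd1 i hi, hκ2 i hi]]
    simp
  have key := mul_div_lt_of_critical (by exact_mod_cast hn) hTa hαa (hd j hj') (hT j hj')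
    (hα j hj') (hκ1 j hj).2 hA (hcrit j hj)
  rw [sum_Icc_one_add, htail] at key
  linarith

theorem stmt5 (n r s : ℕ) (hn : 0 < n) (hr : 0 < r)
    (d κ T α : ℕ → ℝ) (Ta αa : ℝ)
    (hd : ∀ i ∈ Icc 1 (r + s), 0 < d i)
    (hd1 : ∀ i ∈ Icc (r + 1) (r + s), d i = 1)
    (hκ1 : ∀ i ∈ Icc 1 r, 0 < κ i ∧ κ i < 1)
    (hκ2 : ∀ i ∈ Icc (r + 1) (r + s), κ i = 0)
    (hTa : 0 < Ta) (hT : ∀ i ∈ Icc 1 (r + s), 0 < T i)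
    (hαa : 0 < αa) (hα : ∀ i ∈ Icc 1 (r + s), 0 < α i)
    (hcrit : ∀ j ∈ Icc 1 r,
      -(d j * T j / (2 * n * Ta * αa * α j)) * ∑ i ∈ Icc 1 (r + s), α i * d i * (1 - κ i)
      - (α j / (4 * αa ^ 2)) * d j * (1 - κ j)
      + (d j * T j / (2 * n * Ta * α j)) * ∑ i ∈ Icc 1 (r + s), d i * (1 - κ i)
      + d j * T j / (4 * Ta * α j)
      - κ j * d j / (4 * α j) = 0) :
    ∀ j ∈ Icc 1 r,
      (n : ℝ) * Ta * (κ j / T j)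
        < 2 * ∑ i ∈ Icc 1 r, d i * (1 - κ i) + 2 * s + n :=
  stmt5_general n r s hn d κ T α Ta αa hd hd1 hκ1 hκ2 hTa hT hαa hα hcrit
end

section
/- Let n, d_1 > 0, κ_1 ∈ (0,1), T_𝔞, T_1 > 0 and c ≥ c' > 0. Suppose positive reals α, α_1 and α', α_1' satisfy the Ricci equations: (1/4)(κ_1(1 - α_1²/α²) + α_1²/α²) = c T_1, (1/4)(κ_1(1 - α_1'²/α'²) + α_1'²/α'²) = c' T_1, and -(1/2)(d_1(1-κ_1)/n)(α_1/α - 1) + 1/4 = c T_𝔞, -(1/2)(d_1(1-κ_1)/n)(α_1'/α' - 1) + 1/4 = c' T_𝔞. Then α_1/α = α_1'/α', and consequently c = c'. -/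
/-!
Both Ricci components are functions of the single ratio `t = α₁ / α`: the `𝔨₁`-component
`(1/4)(κ₁ + (1 - κ₁) t²)` is strictly increasing for `t ≥ 0`, while the `𝔞`-component is strictly
decreasing. Since `c' ≤ c`, passing from `g` to `g'` can increase neither component, which forces
the two ratios to agree, and then `c = c'`.
-/

open Set

lemma eq_of_strictMonoOn_Ici_of_strictAnti {α β γ : Type*} [LinearOrder α] [Preorder β]
    [Preorder γ] {f : α → β} {g : α → γ} {a x y : α} (hf : StrictMonoOn f (Ici a))
    (hg : StrictAnti g) (hx : a ≤ x) (hfyx : f y ≤ f x) (hgyx : g y ≤ g x) : x = y := by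
  rcases lt_trichotomy x y with hxy | hxy | hyx
  · exact absurd hfyx (hf hx (mem_Ici.2 (hx.trans hxy.le)) hxy).not_ge
  · exact hxy
  · exact absurd hgyx (hg hyx).not_ge

/-- The coefficient of `Q` in `Ric_g|_{𝔨₁}`, in terms of `t = α₁ / α`. -/
noncomputable def ricciK (κ t : ℝ) : ℝ := (1 / 4) * (κ * (1 - t ^ 2) + t ^ 2)

/-- The coefficient of `Q` in `Ric_g|_𝔞`, in terms of `t = α₁ / α` and `K = d₁ (1 - κ₁) / n`. -/
noncomputable def ricciA (K t : ℝ) : ℝ := -(1 / 2) * K * (t - 1) + 1 / 4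

lemma strictMonoOn_ricciK {κ : ℝ} (hκ : κ < 1) : StrictMonoOn (ricciK κ) (Ici 0) := by
  intro s hs t _ hst
  have hsq : s ^ 2 < t ^ 2 := pow_lt_pow_left₀ hst hs two_ne_zero
  simp only [ricciK]
  nlinarith

lemma strictAnti_ricciA {K : ℝ} (hK : 0 < K) : StrictAnti (ricciA K) := by
  intro s t hst
  simp only [ricciA]
  nlinarith

theorem stmt7_general (n d1 κ1 Ta T1 c c' α α1 α' α1' : ℝ)
    (hn : 0 < n) (hd1 : 0 < d1) (hκ1' : κ1 < 1)
    (hTa : 0 < Ta) (hT1 : 0 < T1)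
    (hcc' : c' ≤ c)
    (hα : 0 < α) (hα1 : 0 < α1)
    (h1 : (1 / 4) * (κ1 * (1 - α1 ^ 2 / α ^ 2) + α1 ^ 2 / α ^ 2) = c * T1)
    (h2 : (1 / 4) * (κ1 * (1 - α1' ^ 2 / α' ^ 2) + α1' ^ 2 / α' ^ 2) = c' * T1)
    (h3 : -(1 / 2) * (d1 * (1 - κ1) / n) * (α1 / α - 1) + 1 / 4 = c * Ta)
    (h4 : -(1 / 2) * (d1 * (1 - κ1) / n) * (α1' / α' - 1) + 1 / 4 = c' * Ta) :
    α1 / α = α1' / α' ∧ c = c' := by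
  have hK : 0 < d1 * (1 - κ1) / n := div_pos (mul_pos hd1 (sub_pos.2 hκ1')) hn
  have hK_le : ricciK κ1 (α1' / α') ≤ ricciK κ1 (α1 / α) := by
    simp only [ricciK, div_pow, h1, h2]
    exact mul_le_mul_of_nonneg_right hcc' hT1.le
  have hA_le : ricciA (d1 * (1 - κ1) / n) (α1' / α') ≤ ricciA (d1 * (1 - κ1) / n) (α1 / α) := by
    simp only [ricciA, h3, h4]
    exact mul_le_mul_of_nonneg_right hcc' hTa.le
  have hratio : α1 / α = α1' / α' :=
    eq_of_strictMonoOn_Ici_of_strictAnti (strictMonoOn_ricciK hκ1') (strictAnti_ricciA hK)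
      (div_pos hα1 hα).le hK_le hA_le
  refine ⟨hratio, mul_right_cancel₀ hTa.ne' ?_⟩
  rw [← h3, ← h4, hratio]

theorem stmt7 (n d1 κ1 Ta T1 c c' α α1 α' α1' : ℝ)
    (hn : 0 < n) (hd1 : 0 < d1) (hκ1 : 0 < κ1) (hκ1' : κ1 < 1)
    (hTa : 0 < Ta) (hT1 : 0 < T1)
    (hc' : 0 < c') (hcc' : c' ≤ c)
    (hα : 0 < α) (hα1 : 0 < α1) (hα' : 0 < α') (hα1' : 0 < α1')
    (h1 : (1 / 4) * (κ1 * (1 - α1 ^ 2 / α ^ 2) + α1 ^ 2 / α ^ 2) = c * T1)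
    (h2 : (1 / 4) * (κ1 * (1 - α1' ^ 2 / α' ^ 2) + α1' ^ 2 / α' ^ 2) = c' * T1)
    (h3 : -(1 / 2) * (d1 * (1 - κ1) / n) * (α1 / α - 1) + 1 / 4 = c * Ta)
    (h4 : -(1 / 2) * (d1 * (1 - κ1) / n) * (α1' / α' - 1) + 1 / 4 = c' * Ta) :
    α1 / α = α1' / α' ∧ c = c' :=
  stmt7_general n d1 κ1 Ta T1 c c' α α1 α' α1' hn hd1 hκ1' hTa hT1 hcc' hα hα1 h1 h2 h3 h4
end

section
/- Let T_1, T_2 > 0 and define S(α_1, α_2) = -((α_1 α_2 - 3T_1 α_2 - 3T_2 α_1)² (α_1 + α_2))/(144 α_1² α_2²) + (α_1 α_2 - 3T_1 α_2 - 3T_2 α_1)/(2 α_1 α_2) + 3/(16 α_1) + 3/(16 α_2) on D = {(α_1, α_2) ∈ (0,∞)² : 3T_1/α_1 + 3T_2/α_2 < 1}. If T_1 = T_2 = 1/10, then S has no critical point on D. -/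
/-! With `v = 1 - 3T₁/α₁ - 3T₂/α₂` (so that `D` is `α₁, α₂, v > 0`), the function is
`S = -v²(α₁ + α₂)/144 + v/2 + 3/(16α₁) + 3/(16α₂)`, so
`∂S/∂α₁ = -(6T₁v(α₁ + α₂)/α₁² + v²)/144 + (24T₁ - 3)/(16α₁²)`.
Whenever `0 ≤ T₁ ≤ 1/8` both summands are `≤ 0` and the first is `< 0` on `D`,
so `S` has no critical point there; `T₁ = 1/10` is such a case. -/

theorem fderiv_ne_zero_of_hasDerivAt_fst {𝕜 F G : Type*} [NontriviallyNormedField 𝕜]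
    [NormedAddCommGroup F] [NormedSpace 𝕜 F] [NormedAddCommGroup G] [NormedSpace 𝕜 G]
    {f : 𝕜 × F → G} {a : 𝕜} {b : F} {d : G} (hf : DifferentiableAt 𝕜 f (a, b))
    (hd : HasDerivAt (fun x => f (x, b)) d a) (hd0 : d ≠ 0) : fderiv 𝕜 f (a, b) ≠ 0 := by
  intro h
  have hzero : HasFDerivAt f (0 : 𝕜 × F →L[𝕜] G) (a, b) := h ▸ hf.hasFDerivAt
  have hslice : HasDerivAt (fun x => f (x, b)) 0 a := by
    simpa [Function.comp_def] using
      hzero.comp_hasDerivAt a ((hasDerivAt_id a).prodMk (hasDerivAt_const a b))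
  exact hd0 (hd.unique hslice)

noncomputable section

def scalarCurvature (T1 T2 : ℝ) (p : ℝ × ℝ) : ℝ :=
  -((p.1 * p.2 - 3 * T1 * p.2 - 3 * T2 * p.1) ^ 2 * (p.1 + p.2)) / (144 * p.1 ^ 2 * p.2 ^ 2)
    + (p.1 * p.2 - 3 * T1 * p.2 - 3 * T2 * p.1) / (2 * p.1 * p.2)
    + 3 / (16 * p.1) + 3 / (16 * p.2)

variable (T1 T2 : ℝ)

theorem differentiableAt_scalarCurvature {p : ℝ × ℝ} (h1 : p.1 ≠ 0) (h2 : p.2 ≠ 0) :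
    DifferentiableAt ℝ (scalarCurvature T1 T2) p := by
  unfold scalarCurvature
  simp only [div_eq_mul_inv]
  fun_prop (disch := simp [h1, h2])

theorem scalarCurvature_eq {a b : ℝ} (ha : a ≠ 0) (hb : b ≠ 0) :
    scalarCurvature T1 T2 (a, b) =
      -(1 - 3 * T1 / a - 3 * T2 / b) ^ 2 * (a + b) / 144 + (1 - 3 * T1 / a - 3 * T2 / b) / 2
        + 3 / (16 * a) + 3 / (16 * b) := by
  unfold scalarCurvature
  field_simp

theorem hasDerivAt_scalarCurvature_fst {a b : ℝ} (ha : a ≠ 0) (hb : b ≠ 0) :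
    HasDerivAt (fun x => scalarCurvature T1 T2 (x, b))
      (-(6 * T1 * (1 - 3 * T1 / a - 3 * T2 / b) * (a + b) / a ^ 2
          + (1 - 3 * T1 / a - 3 * T2 / b) ^ 2) / 144 + (24 * T1 - 3) / (16 * a ^ 2)) a := by
  have hv : HasDerivAt (fun x => 1 - 3 * T1 / x - 3 * T2 / b) (3 * T1 / a ^ 2) a := by
    simpa [div_eq_mul_inv, neg_div] using
      (((hasDerivAt_inv ha).const_mul (3 * T1)).const_sub 1).sub_const (3 * T2 / b)
  have hrecip := (hasDerivAt_const a (3 : ℝ)).div ((hasDerivAt_id a).const_mul 16)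
    (mul_ne_zero (by norm_num) ha)
  have hS := ((((hv.pow 2).neg.mul ((hasDerivAt_id a).add_const b)).div_const 144).add
    (hv.div_const 2)).add hrecip |>.add_const (3 / (16 * b))
  refine (hS.congr_of_eventuallyEq ?_).congr_deriv ?_
  · filter_upwards [isOpen_ne.mem_nhds ha] with x hx using scalarCurvature_eq T1 T2 hx hb
  · norm_num only [Pi.neg_apply, Pi.pow_apply, id]
    field_simp
    ring

theorem scalarCurvature_fst_deriv_neg {a b : ℝ} (hT1 : 0 ≤ T1) (hT1' : 8 * T1 ≤ 1)
    (ha : 0 < a) (hb : 0 < b) (hv : 0 < 1 - 3 * T1 / a - 3 * T2 / b) :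
    -(6 * T1 * (1 - 3 * T1 / a - 3 * T2 / b) * (a + b) / a ^ 2
        + (1 - 3 * T1 / a - 3 * T2 / b) ^ 2) / 144 + (24 * T1 - 3) / (16 * a ^ 2) < 0 := by
  have hfirst : 0 < 6 * T1 * (1 - 3 * T1 / a - 3 * T2 / b) * (a + b) / a ^ 2
      + (1 - 3 * T1 / a - 3 * T2 / b) ^ 2 := by positivity
  have hsecond : (24 * T1 - 3) / (16 * a ^ 2) ≤ 0 :=
    div_nonpos_of_nonpos_of_nonneg (by linarith) (by positivity)
  linarith [div_pos hfirst (by norm_num : (0 : ℝ) < 144)]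

theorem fderiv_scalarCurvature_ne_zero {p : ℝ × ℝ} (hT1 : 0 ≤ T1) (hT1' : 8 * T1 ≤ 1)
    (h1 : 0 < p.1) (h2 : 0 < p.2) (hD : 3 * T1 / p.1 + 3 * T2 / p.2 < 1) :
    fderiv ℝ (scalarCurvature T1 T2) p ≠ 0 :=
  fderiv_ne_zero_of_hasDerivAt_fst (differentiableAt_scalarCurvature T1 T2 h1.ne' h2.ne')
    (hasDerivAt_scalarCurvature_fst T1 T2 h1.ne' h2.ne')
    (scalarCurvature_fst_deriv_neg T1 T2 hT1 hT1' h1 h2 (by linarith)).ne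

end

theorem stmt12_general (T1 T2 : ℝ) (hT1 : T1 = 1 / 10)
    (S : ℝ × ℝ → ℝ)
    (hS : ∀ p : ℝ × ℝ, S p =
      -((p.1 * p.2 - 3 * T1 * p.2 - 3 * T2 * p.1) ^ 2 * (p.1 + p.2))
          / (144 * p.1 ^ 2 * p.2 ^ 2)
      + (p.1 * p.2 - 3 * T1 * p.2 - 3 * T2 * p.1) / (2 * p.1 * p.2)
      + 3 / (16 * p.1) + 3 / (16 * p.2)) :
    ∀ p : ℝ × ℝ, 0 < p.1 → 0 < p.2 → 3 * T1 / p.1 + 3 * T2 / p.2 < 1 →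
      fderiv ℝ S p ≠ 0 := by
  obtain rfl : S = scalarCurvature T1 T2 := funext hS
  intro p h1 h2 hD
  exact fderiv_scalarCurvature_ne_zero T1 T2 (by norm_num [hT1]) (by norm_num [hT1]) h1 h2 hD

theorem stmt12 (T1 T2 : ℝ) (hT1 : T1 = 1 / 10) (hT2 : T2 = 1 / 10)
    (S : ℝ × ℝ → ℝ)
    (hS : ∀ p : ℝ × ℝ, S p =
      -((p.1 * p.2 - 3 * T1 * p.2 - 3 * T2 * p.1) ^ 2 * (p.1 + p.2))
          / (144 * p.1 ^ 2 * p.2 ^ 2)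
      + (p.1 * p.2 - 3 * T1 * p.2 - 3 * T2 * p.1) / (2 * p.1 * p.2)
      + 3 / (16 * p.1) + 3 / (16 * p.2)) :
    ∀ p : ℝ × ℝ, 0 < p.1 → 0 < p.2 → 3 * T1 / p.1 + 3 * T2 / p.2 < 1 →
      fderiv ℝ S p ≠ 0 :=
  stmt12_general T1 T2 hT1 S hS
end

section
/- Let n, d_i > 0 (i = 1,...,r+s), κ_i ∈ (0,1) for i ≤ r, κ_i = 0 for i > r, T_𝔞 ≥ 0 and T_1,...,T_{r+s} > 0, with m maximizing κ_i/T_i over i ≤ r, and suppose κ_m tr_Q T/T_m < d + d_m - κ_m d_m where tr_Q T = n T_𝔞 + ∑ d_i T_i and d = n + ∑ d_i. Then the supremum of S over the constraint set {(α, α_1,...,α_{r+s}) ∈ (0,∞)^{r+s+1} : n T_𝔞/α + ∑ d_i T_i/α_i = 1} is attained, where S = -(1/4)∑_{i=1}^{r+s}(α_i/α²)d_i(1-κ_i) + (1/2)∑ d_i(1-κ_i)/α + n/(4α) + (1/4)∑_{i=1}^{r} κ_i d_i/α_i. -/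
/-!
Write `V = κ_m / (4 T_m)`. On the constraint set the weights `d_i T_i / α_i` sum to at most `1`,
so `κ_i / T_i ≤ κ_m / T_m` bounds the `κ`-part of `S` by `V`; the rest of `S` is `c / α` minus
`∑ α_i d_i (1 - κ_i) / (4 α²)`, where `c = ∑ d_i (1 - κ_i) / 2 + n / 4`. Hence `S ≥ V + ε` confines
`α` to `[γ / (4c), c / ε]` and each `α_i` to `[d_i T_i, 4c² / (ε d_i (1 - κ_i))]`, with
`γ = d_m² T_m (1 - κ_m)`: a compact region on which `S` is continuous. Along the curve
`α = α_i = t` (`i ≠ m`), `α_m = d_m T_m t / (t - U)`, where `U = tr_Q T - d_m T_m`, one has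
`S = V + (E - γ / (t - U)) / (4t)` with `E = d + d_m - κ_m d_m - κ_m tr_Q T / T_m > 0` by
hypothesis. So some constraint point has `S > V`; taking `ε` to be its excess, the maximum of `S`
over the compact region is the global maximum.
-/

open Finset

theorem exists_isMaxOn_of_dominated {X β : Type*} [TopologicalSpace X] [LinearOrder β]
    [TopologicalSpace β] [ClosedIciTopology β] {f : X → β} {A K : Set X} (hK : IsCompact K)
    (hKA : K ⊆ A) (hf : ContinuousOn f K) {x₀ : X} (hx₀ : x₀ ∈ A)
    (hdom : ∀ x ∈ A, f x₀ ≤ f x → ∃ y ∈ K, f x ≤ f y) : ∃ z ∈ A, IsMaxOn f A z := by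
  obtain ⟨y₀, hy₀, hx₀y₀⟩ := hdom x₀ hx₀ le_rfl
  obtain ⟨z, hz, hzmax⟩ := hK.exists_isMaxOn ⟨y₀, hy₀⟩ hf
  refine ⟨z, hKA hz, fun x hx => ?_⟩
  rcases le_or_gt (f x₀) (f x) with hle | hlt
  · obtain ⟨y, hy, hxy⟩ := hdom x hx hle
    exact hxy.trans (hzmax hy)
  · exact hlt.le.trans (hx₀y₀.trans (hzmax hy₀))

theorem Finset.sum_mul_le_of_sum_le_one {ι : Type*} {s t : Finset ι} (hst : s ⊆ t)
    {a x : ι → ℝ} {M : ℝ} (hM : 0 ≤ M) (ha : ∀ i ∈ s, a i ≤ M) (hx : ∀ i ∈ t, 0 ≤ x i)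
    (hsum : ∑ i ∈ t, x i ≤ 1) : ∑ i ∈ s, a i * x i ≤ M :=
  calc ∑ i ∈ s, a i * x i ≤ ∑ i ∈ s, M * x i :=
        sum_le_sum fun i hi => mul_le_mul_of_nonneg_right (ha i hi) (hx i (hst hi))
    _ = M * ∑ i ∈ s, x i := (mul_sum ..).symm
    _ ≤ M * 1 := mul_le_mul_of_nonneg_left
        ((sum_le_sum_of_subset_of_nonneg hst fun i hi _ => hx i hi).trans hsum) hM
    _ = M := mul_one M

theorem Finset.sum_apply_update_const {ι M : Type*} [DecidableEq ι] [AddCommGroup M]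
    {s : Finset ι} {m : ι} (hm : m ∈ s) {α : Type*} (F : ι → α → M) (t b : α) :
    ∑ i ∈ s, F i (Function.update (fun _ => t) m b i) = ∑ i ∈ s, F i t - F m t + F m b := by
  rw [← add_sum_erase _ _ hm, ← add_sum_erase _ (fun i => F i t) hm,
    sum_congr rfl fun i hi => by rw [Function.update_of_ne (ne_of_mem_erase hi)]]
  simp only [Function.update_self]
  abel

variable {ι : Type*} {I J : Finset ι} {n Ta : ℝ} {d κ T : ι → ℝ} {m : ι}

noncomputable def scal (I J : Finset ι) (n : ℝ) (d κ : ι → ℝ) (αa : ℝ) (α : ι → ℝ) : ℝ :=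
  -(1 / 4) * ∑ i ∈ I, (α i / αa ^ 2) * d i * (1 - κ i)
    + (1 / 2) * ∑ i ∈ I, d i * (1 - κ i) / αa
    + n / (4 * αa)
    + (1 / 4) * ∑ i ∈ J, κ i * d i / α i

noncomputable def scalCoeff (I : Finset ι) (n : ℝ) (d κ : ι → ℝ) : ℝ :=
  (∑ i ∈ I, d i * (1 - κ i)) / 2 + n / 4

noncomputable def constraintFn (I : Finset ι) (n Ta : ℝ) (d T : ι → ℝ) (αa : ℝ) (α : ι → ℝ) :
    ℝ :=
  n * Ta / αa + ∑ i ∈ I, d i * T i / α i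

def constraintSet (I : Finset ι) (n Ta : ℝ) (d T : ι → ℝ) : Set (ℝ × (ι → ℝ)) :=
  {p | 0 < p.1 ∧ (∀ i ∈ I, 0 < p.2 i) ∧ constraintFn I n Ta d T p.1 p.2 = 1}

theorem scal_eq {αa : ℝ} (hαa : αa ≠ 0) (α : ι → ℝ) :
    scal I J n d κ αa α = (∑ i ∈ J, κ i * d i / α i) / 4 + scalCoeff I n d κ / αa
      - (∑ i ∈ I, α i * (d i * (1 - κ i))) / (4 * αa ^ 2) := by
  have hquad : ∑ i ∈ I, α i / αa ^ 2 * d i * (1 - κ i)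
      = (∑ i ∈ I, α i * (d i * (1 - κ i))) / αa ^ 2 := by
    rw [sum_div]
    exact sum_congr rfl fun i _ => by ring
  rw [scal, scalCoeff, hquad, ← sum_div]
  field_simp
  ring

theorem scal_congr (hJI : J ⊆ I) (αa : ℝ) {α β : ι → ℝ} (h : ∀ i ∈ I, α i = β i) :
    scal I J n d κ αa α = scal I J n d κ αa β := by
  unfold scal
  rw [sum_congr rfl fun i hi => by rw [h i hi],
    sum_congr rfl fun i (hi : i ∈ J) => by rw [h i (hJI hi)]]

theorem constraintFn_congr (αa : ℝ) {α β : ι → ℝ} (h : ∀ i ∈ I, α i = β i) :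
    constraintFn I n Ta d T αa α = constraintFn I n Ta d T αa β := by
  unfold constraintFn
  rw [sum_congr rfl fun i hi => by rw [h i hi]]

theorem continuousOn_scal (hJI : J ⊆ I) :
    ContinuousOn (fun p : ℝ × (ι → ℝ) => scal I J n d κ p.1 p.2)
      {p | 0 < p.1 ∧ ∀ i ∈ I, 0 < p.2 i} := by
  set U := {p : ℝ × (ι → ℝ) | 0 < p.1 ∧ ∀ i ∈ I, 0 < p.2 i}
  have hU : ∀ p ∈ U, p.1 ≠ 0 := fun p hp => hp.1.ne'
  have hUsq : ∀ p ∈ U, p.1 ^ 2 ≠ 0 := fun p hp => pow_ne_zero 2 hp.1.ne'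
  have hUfour : ∀ p ∈ U, 4 * p.1 ≠ 0 := fun p hp => mul_ne_zero four_ne_zero hp.1.ne'
  unfold scal
  refine .add (.add (.add (continuousOn_const.mul (continuousOn_finsetSum _ fun i hi => ?_))
    (continuousOn_const.mul (continuousOn_finsetSum _ fun i hi => ?_))) ?_)
    (continuousOn_const.mul (continuousOn_finsetSum _ fun i hi => ?_))
  on_goal 4 => have hUi : ∀ p ∈ U, p.2 i ≠ 0 := fun p hp => (hp.2 i (hJI hi)).ne'
  all_goals fun_prop (disch := assumption)

theorem continuousOn_constraintFn :
    ContinuousOn (fun p : ℝ × (ι → ℝ) => constraintFn I n Ta d T p.1 p.2)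
      {p | 0 < p.1 ∧ ∀ i ∈ I, 0 < p.2 i} := by
  unfold constraintFn
  refine .add ?_ (continuousOn_finsetSum _ fun i hi => ?_)
  · fun_prop (disch := exact fun p hp => hp.1.ne')
  · fun_prop (disch := exact fun p hp => (hp.2 i hi).ne')

theorem scalCoeff_pos (hd : ∀ i ∈ I, 0 < d i) (hκ : ∀ i ∈ I, κ i < 1) (hn : 0 ≤ n)
    (hm : m ∈ I) : 0 < scalCoeff I n d κ := by
  have hsum : 0 < ∑ i ∈ I, d i * (1 - κ i) :=
    sum_pos (fun i hi => mul_pos (hd i hi) (sub_pos.2 (hκ i hi))) ⟨m, hm⟩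
  unfold scalCoeff
  positivity

theorem sum_mul_one_sub_eq (hJI : J ⊆ I) (hκJ : ∀ i ∈ I, i ∉ J → κ i = 0) :
    ∑ i ∈ I, d i * (1 - κ i) = ∑ i ∈ I, d i - ∑ i ∈ J, κ i * d i := by
  rw [sum_subset hJI fun i hi hiJ => by rw [hκJ i hi hiJ, zero_mul],
    ← sum_sub_distrib]
  exact sum_congr rfl fun i _ => by ring

theorem sum_div_le_one_of_mem_constraintSet (hn : 0 ≤ n) (hTa : 0 ≤ Ta)
    {p : ℝ × (ι → ℝ)} (hp : p ∈ constraintSet I n Ta d T) :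
    ∑ i ∈ I, d i * T i / p.2 i ≤ 1 := by
  obtain ⟨hp1, -, hcon⟩ := hp
  have : 0 ≤ n * Ta / p.1 := by positivity
  unfold constraintFn at hcon
  linarith

theorem mul_le_snd_of_mem_constraintSet (hd : ∀ i ∈ I, 0 < d i) (hT : ∀ i ∈ I, 0 < T i)
    (hn : 0 ≤ n) (hTa : 0 ≤ Ta) {p : ℝ × (ι → ℝ)} (hp : p ∈ constraintSet I n Ta d T)
    {k : ι} (hk : k ∈ I) : d k * T k ≤ p.2 k := by
  have hterm : d k * T k / p.2 k ≤ 1 :=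
    (single_le_sum (fun i hi => (div_pos (mul_pos (hd i hi) (hT i hi)) (hp.2.1 i hi)).le)
      hk).trans (sum_div_le_one_of_mem_constraintSet hn hTa hp)
  rwa [div_le_one (hp.2.1 k hk)] at hterm

theorem scal_sub_mul_sq_add_le (hJI : J ⊆ I) (hd : ∀ i ∈ I, 0 < d i) (hκ : ∀ i ∈ I, κ i < 1)
    (hT : ∀ i ∈ I, 0 < T i) (hn : 0 ≤ n) (hTa : 0 ≤ Ta) (hm : m ∈ J) (hκm : 0 ≤ κ m)
    (hmax : ∀ i ∈ J, κ i / T i ≤ κ m / T m) {p : ℝ × (ι → ℝ)}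
    (hp : p ∈ constraintSet I n Ta d T) {k : ι} (hk : k ∈ I) :
    (scal I J n d κ p.1 p.2 - κ m / (4 * T m)) * p.1 ^ 2 + p.2 k * (d k * (1 - κ k)) / 4
      ≤ scalCoeff I n d κ * p.1 := by
  have hp1 := hp.1
  have hp2 := hp.2.1
  have hkappa : ∑ i ∈ J, κ i * d i / p.2 i ≤ κ m / T m := by
    have := sum_mul_le_of_sum_le_one hJI (div_nonneg hκm (hT m (hJI hm)).le) hmax
      (fun i hi => (div_pos (mul_pos (hd i hi) (hT i hi)) (hp2 i hi)).le)
      (sum_div_le_one_of_mem_constraintSet hn hTa hp)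
    refine le_of_eq_of_le (sum_congr rfl fun i hi => ?_) this
    have := (hT i (hJI hi)).ne'
    field_simp
  have hquad : p.2 k * (d k * (1 - κ k)) ≤ ∑ i ∈ I, p.2 i * (d i * (1 - κ i)) :=
    single_le_sum (fun i hi => (mul_pos (hp2 i hi) (mul_pos (hd i hi)
      (sub_pos.2 (hκ i hi)))).le) hk
  have hexpand : ((∑ i ∈ J, κ i * d i / p.2 i) / 4 + scalCoeff I n d κ / p.1
        - (∑ i ∈ I, p.2 i * (d i * (1 - κ i))) / (4 * p.1 ^ 2) - κ m / (4 * T m)) * p.1 ^ 2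
      = (∑ i ∈ J, κ i * d i / p.2 i - κ m / T m) * p.1 ^ 2 / 4 + scalCoeff I n d κ * p.1
        - (∑ i ∈ I, p.2 i * (d i * (1 - κ i))) / 4 := by
    field_simp
    ring
  have hneg : (∑ i ∈ J, κ i * d i / p.2 i - κ m / T m) * p.1 ^ 2 ≤ 0 :=
    mul_nonpos_of_nonpos_of_nonneg (by linarith) (sq_nonneg _)
  rw [scal_eq hp1.ne', hexpand]
  linarith

section witness

variable [DecidableEq ι] {t τ : ℝ}

theorem constraintFn_update_const (hm : m ∈ I) (hdm : d m ≠ 0) (hTm : T m ≠ 0) (ht : t ≠ 0)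
    (htτ : t - τ = n * Ta + ∑ i ∈ I, d i * T i - d m * T m) :
    constraintFn I n Ta d T t (Function.update (fun _ => t) m (d m * T m * t / τ)) = 1 := by
  have hsum := sum_apply_update_const hm (fun i x => d i * T i / x) t (d m * T m * t / τ)
  rw [constraintFn, hsum, ← sum_div]
  field_simp
  linear_combination -htτ

theorem scal_update_const (hJI : J ⊆ I) (hκJ : ∀ i ∈ I, i ∉ J → κ i = 0) (hm : m ∈ J)
    (hdm : d m ≠ 0) (hTm : T m ≠ 0) (ht : t ≠ 0) (hτ : τ ≠ 0)
    (htτ : t - τ = n * Ta + ∑ i ∈ I, d i * T i - d m * T m) :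
    scal I J n d κ t (Function.update (fun _ => t) m (d m * T m * t / τ))
      = κ m / (4 * T m) + (n + ∑ i ∈ I, d i + d m - κ m * d m
          - κ m * (n * Ta + ∑ i ∈ I, d i * T i) / T m - d m ^ 2 * T m * (1 - κ m) / τ)
        / (4 * t) := by
  have hquad := sum_apply_update_const (hJI hm) (fun i x => x * (d i * (1 - κ i))) t
    (d m * T m * t / τ)
  have hkappa := sum_apply_update_const hm (fun i x => κ i * d i / x) t (d m * T m * t / τ)
  rw [scal_eq ht, hquad, hkappa, ← mul_sum, ← sum_div, scalCoeff, sum_mul_one_sub_eq hJI hκJ]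
  field_simp
  linear_combination (-2 * τ * κ m) * htτ

end witness

theorem exists_mem_constraintSet_scal_gt (hJI : J ⊆ I) (hd : ∀ i ∈ I, 0 < d i)
    (hκ : ∀ i ∈ I, κ i < 1) (hκJ : ∀ i ∈ I, i ∉ J → κ i = 0) (hT : ∀ i ∈ I, 0 < T i)
    (hn : 0 ≤ n) (hTa : 0 ≤ Ta) (hm : m ∈ J)
    (hsuf : κ m * (n * Ta + ∑ i ∈ I, d i * T i) / T m
      < n + ∑ i ∈ I, d i + d m - κ m * d m) :
    ∃ p ∈ constraintSet I n Ta d T, κ m / (4 * T m) < scal I J n d κ p.1 p.2 := by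
  classical
  have hdm := hd m (hJI hm)
  have hTm := hT m (hJI hm)
  set E := n + ∑ i ∈ I, d i + d m - κ m * d m - κ m * (n * Ta + ∑ i ∈ I, d i * T i) / T m
  set γ := d m ^ 2 * T m * (1 - κ m)
  have hE : 0 < E := sub_pos.2 hsuf
  have hγ : 0 < γ := by have := sub_pos.2 (hκ m (hJI hm)); positivity
  have hU : 0 ≤ n * Ta + ∑ i ∈ I, d i * T i - d m * T m := by
    have := single_le_sum (fun i hi => (mul_pos (hd i hi) (hT i hi)).le) (hJI hm)
    have := mul_nonneg hn hTa
    linarith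
  set τ := 2 * γ / E
  set t := n * Ta + ∑ i ∈ I, d i * T i - d m * T m + τ
  have hτ : 0 < τ := by positivity
  have ht : 0 < t := by positivity
  have htτ : t - τ = n * Ta + ∑ i ∈ I, d i * T i - d m * T m := add_sub_cancel_right _ _
  refine ⟨(t, Function.update (fun _ => t) m (d m * T m * t / τ)), ⟨ht, fun i _ => ?_,
    constraintFn_update_const (hJI hm) hdm.ne' hTm.ne' ht.ne' htτ⟩, ?_⟩
  · change (0 : ℝ) < Function.update (fun _ => t) m (d m * T m * t / τ) i
    rw [Function.update_apply]
    split_ifs <;> positivity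
  · have hγτ : γ / τ = E / 2 := by
      rw [show τ = 2 * γ / E from rfl]
      field_simp
    rw [scal_update_const hJI hκJ hm hdm.ne' hTm.ne' ht.ne' hτ.ne' htτ, hγτ]
    have : 0 < (E - E / 2) / (4 * t) := by apply div_pos <;> linarith
    linarith

section superlevelBox

variable [DecidableEq ι]

-- Coordinates outside `I` enter neither `scal` nor `constraintFn`; pinning them to `1` makes
-- the box compact.
def superlevelBox (I : Finset ι) (n : ℝ) (d κ T : ι → ℝ) (m : ι) (ε : ℝ) :
    Set (ℝ × (ι → ℝ)) :=
  Set.Icc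
    (d m ^ 2 * T m * (1 - κ m) / (4 * scalCoeff I n d κ), I.piecewise (fun i => d i * T i) 1)
    (scalCoeff I n d κ / ε,
      I.piecewise (fun i => 4 * scalCoeff I n d κ ^ 2 / (ε * (d i * (1 - κ i)))) 1)

theorem superlevelBox_subset (hd : ∀ i ∈ I, 0 < d i) (hκ : ∀ i ∈ I, κ i < 1)
    (hT : ∀ i ∈ I, 0 < T i) (hn : 0 ≤ n) (hm : m ∈ I) (ε : ℝ) :
    superlevelBox I n d κ T m ε ⊆ {p | 0 < p.1 ∧ ∀ i ∈ I, 0 < p.2 i} := by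
  rintro p ⟨hlo, -⟩
  have hc := scalCoeff_pos hd hκ hn hm
  have := hd m hm
  have := hT m hm
  have := sub_pos.2 (hκ m hm)
  refine ⟨lt_of_lt_of_le (by positivity) hlo.1, fun i hi => lt_of_lt_of_le ?_ (hlo.2 i)⟩
  change 0 < I.piecewise (fun i => d i * T i) 1 i
  rw [piecewise_eq_of_mem _ _ _ hi]
  exact mul_pos (hd i hi) (hT i hi)

theorem isCompact_superlevelBox_inter (hd : ∀ i ∈ I, 0 < d i) (hκ : ∀ i ∈ I, κ i < 1)
    (hT : ∀ i ∈ I, 0 < T i) (hn : 0 ≤ n) (hm : m ∈ I) (ε : ℝ) :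
    IsCompact (superlevelBox I n d κ T m ε ∩ {p | constraintFn I n Ta d T p.1 p.2 = 1}) := by
  exact isCompact_Icc.of_isClosed_subset
    ((continuousOn_constraintFn.mono (superlevelBox_subset hd hκ hT hn hm ε))
    |>.preimage_isClosed_of_isClosed isClosed_Icc isClosed_singleton) Set.inter_subset_left

theorem piecewise_mem_superlevelBox (hJI : J ⊆ I) (hd : ∀ i ∈ I, 0 < d i)
    (hκ : ∀ i ∈ I, κ i < 1) (hT : ∀ i ∈ I, 0 < T i) (hn : 0 ≤ n) (hTa : 0 ≤ Ta) (hm : m ∈ J)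
    (hκm : 0 ≤ κ m) (hmax : ∀ i ∈ J, κ i / T i ≤ κ m / T m) {ε : ℝ} (hε : 0 < ε)
    {q : ℝ × (ι → ℝ)} (hq : q ∈ constraintSet I n Ta d T)
    (hle : κ m / (4 * T m) + ε ≤ scal I J n d κ q.1 q.2) :
    (q.1, I.piecewise q.2 1) ∈ superlevelBox I n d κ T m ε := by
  set c := scalCoeff I n d κ with hc_def
  have hc : 0 < c := scalCoeff_pos hd hκ hn (hJI hm)
  have hq1 := hq.1
  have hkey : ∀ k ∈ I, ε * q.1 ^ 2 + q.2 k * (d k * (1 - κ k)) / 4 ≤ c * q.1 := fun k hk =>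
    (add_le_add_left (mul_le_mul_of_nonneg_right (by linarith) (sq_nonneg _)) _).trans
      (scal_sub_mul_sq_add_le hJI hd hκ hT hn hTa hm hκm hmax hq hk)
  have hweight : ∀ k ∈ I, 0 < q.2 k * (d k * (1 - κ k)) := fun k hk =>
    mul_pos (hq.2.1 k hk) (mul_pos (hd k hk) (sub_pos.2 (hκ k hk)))
  have hfst : q.1 * ε ≤ c := by
    nlinarith [hkey m (hJI hm), hweight m (hJI hm)]
  refine ⟨⟨?_, fun i => ?_⟩, ⟨(le_div_iff₀ hε).2 hfst, fun i => ?_⟩⟩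
  · have hqm := mul_le_snd_of_mem_constraintSet hd hT hn hTa hq (hJI hm)
    have := hkey m (hJI hm)
    have := mul_le_mul_of_nonneg_right hqm
      (mul_pos (hd m (hJI hm)) (sub_pos.2 (hκ m (hJI hm)))).le
    rw [div_le_iff₀ (by positivity)]
    nlinarith
  · by_cases hi : i ∈ I
    · simpa [hi] using mul_le_snd_of_mem_constraintSet hd hT hn hTa hq hi
    · simp [hi]
  · by_cases hi : i ∈ I
    · have hqi : q.2 i * (d i * (1 - κ i)) ≤ 4 * (c * q.1) := by
        nlinarith [hkey i hi, sq_nonneg q.1]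
      have := mul_pos (hd i hi) (sub_pos.2 (hκ i hi))
      simp only [piecewise_eq_of_mem _ _ _ hi, ← hc_def]
      rw [le_div_iff₀ (by positivity)]
      nlinarith [mul_le_mul_of_nonneg_left hqi hε.le, mul_le_mul_of_nonneg_left hfst hc.le]
    · simp [hi]

end superlevelBox

theorem exists_isMaxOn_scal (hJI : J ⊆ I) (hd : ∀ i ∈ I, 0 < d i) (hκ : ∀ i ∈ I, κ i < 1)
    (hκJ : ∀ i ∈ I, i ∉ J → κ i = 0) (hT : ∀ i ∈ I, 0 < T i) (hn : 0 ≤ n) (hTa : 0 ≤ Ta)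
    (hm : m ∈ J) (hκm : 0 ≤ κ m) (hmax : ∀ i ∈ J, κ i / T i ≤ κ m / T m)
    (hsuf : κ m * (n * Ta + ∑ i ∈ I, d i * T i) / T m
      < n + ∑ i ∈ I, d i + d m - κ m * d m) :
    ∃ p ∈ constraintSet I n Ta d T,
      IsMaxOn (fun p : ℝ × (ι → ℝ) => scal I J n d κ p.1 p.2) (constraintSet I n Ta d T) p := by
  classical
  obtain ⟨p₀, hp₀, hgt⟩ := exists_mem_constraintSet_scal_gt hJI hd hκ hκJ hT hn hTa hm hsuf
  set ε := scal I J n d κ p₀.1 p₀.2 - κ m / (4 * T m)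
  have hpos := superlevelBox_subset hd hκ hT hn (hJI hm) ε
  refine exists_isMaxOn_of_dominated (isCompact_superlevelBox_inter hd hκ hT hn (hJI hm) ε)
    (fun p hp => ⟨(hpos hp.1).1, (hpos hp.1).2, hp.2⟩)
    ((continuousOn_scal hJI).mono fun p hp => hpos hp.1) hp₀ fun q hq hle => ?_
  have hrestrict : ∀ i ∈ I, q.2 i = I.piecewise q.2 1 i := fun i hi =>
    (piecewise_eq_of_mem _ _ _ hi).symm
  refine ⟨(q.1, I.piecewise q.2 1), ⟨piecewise_mem_superlevelBox hJI hd hκ hT hn hTa hm hκm hmax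
    (sub_pos.2 hgt) hq (by linarith), ?_⟩, (scal_congr hJI _ hrestrict).le⟩
  exact (constraintFn_congr _ hrestrict).symm.trans hq.2.2

theorem stmt19_general (n r s : ℕ)
    (d κ T : ℕ → ℝ) (Ta : ℝ) (m : ℕ)
    (hd : ∀ i ∈ Icc 1 (r + s), 0 < d i)
    (hκ1 : ∀ i ∈ Icc 1 r, 0 < κ i ∧ κ i < 1)
    (hκ2 : ∀ i ∈ Icc (r + 1) (r + s), κ i = 0)
    (hTa : 0 ≤ Ta) (hT : ∀ i ∈ Icc 1 (r + s), 0 < T i)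
    (hm : m ∈ Icc 1 r) (hmax : ∀ i ∈ Icc 1 r, κ i / T i ≤ κ m / T m)
    (hsuf : κ m * ((n : ℝ) * Ta + ∑ i ∈ Icc 1 (r + s), d i * T i) / T m
      < ((n : ℝ) + ∑ i ∈ Icc 1 (r + s), d i) + d m - κ m * d m)
    (S : ℝ → (ℕ → ℝ) → ℝ)
    (hS : ∀ αa α, S αa α =
      -(1 / 4) * ∑ i ∈ Icc 1 (r + s), (α i / αa ^ 2) * d i * (1 - κ i)
      + (1 / 2) * ∑ i ∈ Icc 1 (r + s), d i * (1 - κ i) / αa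
      + (n : ℝ) / (4 * αa)
      + (1 / 4) * ∑ i ∈ Icc 1 r, κ i * d i / α i) :
    ∃ αa : ℝ, ∃ α : ℕ → ℝ,
      (0 < αa ∧ (∀ i ∈ Icc 1 (r + s), 0 < α i)
        ∧ (n : ℝ) * Ta / αa + ∑ i ∈ Icc 1 (r + s), d i * T i / α i = 1)
      ∧ ∀ βa : ℝ, ∀ β : ℕ → ℝ,
          0 < βa → (∀ i ∈ Icc 1 (r + s), 0 < β i) →
          (n : ℝ) * Ta / βa + ∑ i ∈ Icc 1 (r + s), d i * T i / β i = 1 →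
          S βa β ≤ S αa α := by
  obtain rfl : S = scal (Icc 1 (r + s)) (Icc 1 r) n d κ := funext₂ hS
  have hκ : ∀ i ∈ Icc 1 (r + s), κ i < 1 := fun i hi => by
    by_cases hir : i ≤ r
    · exact (hκ1 i (mem_Icc.2 ⟨(mem_Icc.1 hi).1, hir⟩)).2
    · rw [hκ2 i (mem_Icc.2 ⟨by omega, (mem_Icc.1 hi).2⟩)]
      exact one_pos
  have hκJ : ∀ i ∈ Icc 1 (r + s), i ∉ Icc 1 r → κ i = 0 := fun i hi hir => by
    simp only [mem_Icc, not_and, not_le] at hi hir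
    exact hκ2 i (mem_Icc.2 ⟨hir hi.1, hi.2⟩)
  obtain ⟨p, hp, hpmax⟩ := exists_isMaxOn_scal (Icc_subset_Icc_right (Nat.le_add_right r s)) hd
    hκ hκJ hT n.cast_nonneg hTa hm (hκ1 m hm).1.le hmax hsuf
  exact ⟨p.1, p.2, hp, fun βa β h1 h2 h3 => isMaxOn_iff.1 hpmax (βa, β) ⟨h1, h2, h3⟩⟩

theorem stmt19 (n r s : ℕ) (hn : 0 < n) (hr : 0 < r)
    (d κ T : ℕ → ℝ) (Ta : ℝ) (m : ℕ)
    (hd : ∀ i ∈ Icc 1 (r + s), 0 < d i)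
    (hκ1 : ∀ i ∈ Icc 1 r, 0 < κ i ∧ κ i < 1)
    (hκ2 : ∀ i ∈ Icc (r + 1) (r + s), κ i = 0)
    (hTa : 0 ≤ Ta) (hT : ∀ i ∈ Icc 1 (r + s), 0 < T i)
    (hm : m ∈ Icc 1 r) (hmax : ∀ i ∈ Icc 1 r, κ i / T i ≤ κ m / T m)
    (hsuf : κ m * ((n : ℝ) * Ta + ∑ i ∈ Icc 1 (r + s), d i * T i) / T m
      < ((n : ℝ) + ∑ i ∈ Icc 1 (r + s), d i) + d m - κ m * d m)
    (S : ℝ → (ℕ → ℝ) → ℝ)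
    (hS : ∀ αa α, S αa α =
      -(1 / 4) * ∑ i ∈ Icc 1 (r + s), (α i / αa ^ 2) * d i * (1 - κ i)
      + (1 / 2) * ∑ i ∈ Icc 1 (r + s), d i * (1 - κ i) / αa
      + (n : ℝ) / (4 * αa)
      + (1 / 4) * ∑ i ∈ Icc 1 r, κ i * d i / α i) :
    ∃ αa : ℝ, ∃ α : ℕ → ℝ,
      (0 < αa ∧ (∀ i ∈ Icc 1 (r + s), 0 < α i)
        ∧ (n : ℝ) * Ta / αa + ∑ i ∈ Icc 1 (r + s), d i * T i / α i = 1)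
      ∧ ∀ βa : ℝ, ∀ β : ℕ → ℝ,
          0 < βa → (∀ i ∈ Icc 1 (r + s), 0 < β i) →
          (n : ℝ) * Ta / βa + ∑ i ∈ Icc 1 (r + s), d i * T i / β i = 1 →
          S βa β ≤ S αa α :=
  stmt19_general n r s d κ T Ta m hd hκ1 hκ2 hTa hT hm hmax hsuf S hS
end
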